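/- Let (X, ν) be a measure space and define F : L²(X, ν) → ℝ by F(v) := ∫_X (min(v(x), 0))² dν(x). Then F is directionally differentiable: for all v, h ∈ L²(X, ν), the limit lim_{t→0⁺} (F(v + t h) − F(v))/t exists and equals 2 ∫_X min(v(x), 0) · h(x) dν(x). -/

import Mathlib

open MeasureTheory Filter
open scoped Topology

/-!
The function `φ a = min a 0 ^ 2` is `C¹` with `2`-Lipschitz derivative `2 * min a 0`, hence
`|φ (a + s) - φ a - 2 * min a 0 * s| ≤ s ^ 2`. Applied with `s = t * h x`, this bound gives both the
pointwise limit of the difference quotients and, for `0 < t ≤ 1`, the integrable majorant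
`v ^ 2 + 2 * h ^ 2`, so dominated convergence applies.
-/

theorem min_zero_sq_sub_sub_le (x y : ℝ) :
    |min y 0 ^ 2 - min x 0 ^ 2 - 2 * min x 0 * (y - x)| ≤ (y - x) ^ 2 := by
  rw [abs_le]
  rcases le_total x 0 with hx | hx <;> rcases le_total y 0 with hy | hy <;>
    simp only [min_eq_left, min_eq_right, hx, hy] <;> constructor <;> nlinarith

theorem abs_slope_min_zero_sq_sub_le (a b : ℝ) {t : ℝ} (ht : 0 < t) :
    |(min (a + t * b) 0 ^ 2 - min a 0 ^ 2) / t - 2 * min a 0 * b| ≤ t * b ^ 2 := by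
  have key := min_zero_sq_sub_sub_le a (a + t * b)
  rw [add_sub_cancel_left] at key
  calc |(min (a + t * b) 0 ^ 2 - min a 0 ^ 2) / t - 2 * min a 0 * b|
      = |min (a + t * b) 0 ^ 2 - min a 0 ^ 2 - 2 * min a 0 * (t * b)| / t := by
        rw [← abs_of_pos ht, ← abs_div, abs_of_pos ht]
        congr 1
        field_simp
    _ ≤ (t * b) ^ 2 / t := by gcongr
    _ = t * b ^ 2 := by field_simp

theorem tendsto_slope_min_zero_sq (a b : ℝ) :
    Tendsto (fun t : ℝ => (min (a + t * b) 0 ^ 2 - min a 0 ^ 2) / t) (𝓝[>] 0)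
      (𝓝 (2 * min a 0 * b)) := by
  have hbound : Tendsto (fun t : ℝ => t * b ^ 2) (𝓝[>] 0) (𝓝 0) := by
    simpa using (tendsto_nhdsWithin_of_tendsto_nhds (tendsto_id (x := 𝓝 (0 : ℝ)))).mul_const
      (b ^ 2)
  refine tendsto_iff_norm_sub_tendsto_zero.2 (squeeze_zero' (.of_forall fun _ => norm_nonneg _)
    ?_ hbound)
  filter_upwards [self_mem_nhdsWithin] with t (ht : 0 < t)
  exact abs_slope_min_zero_sq_sub_le a b ht

theorem abs_slope_min_zero_sq_le (a b : ℝ) {t : ℝ} (ht₀ : 0 < t) (ht₁ : t ≤ 1) :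
    |(min (a + t * b) 0 ^ 2 - min a 0 ^ 2) / t| ≤ a ^ 2 + 2 * b ^ 2 := by
  have hmin : |min a 0| ≤ |a| := by
    rcases le_total a 0 with ha | ha <;> simp [ha]
  have hprod : 2 * |min a 0 * b| ≤ a ^ 2 + b ^ 2 := by
    rw [abs_mul]
    nlinarith [two_mul_le_add_sq |a| |b|, sq_abs a, sq_abs b, abs_nonneg b]
  calc _ ≤ |2 * min a 0 * b| + t * b ^ 2 := by
        have := abs_slope_min_zero_sq_sub_le a b ht₀
        have := abs_sub_abs_le_abs_sub ((min (a + t * b) 0 ^ 2 - min a 0 ^ 2) / t)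
          (2 * min a 0 * b)
        linarith
    _ ≤ a ^ 2 + 2 * b ^ 2 := by
        rw [mul_assoc, abs_mul, abs_two]
        nlinarith [sq_nonneg b]

section Integral

variable {X : Type*} [MeasurableSpace X] {μ : Measure X} {f g : X → ℝ}

theorem MeasureTheory.MemLp.integrable_min_zero_sq (hf : MemLp f 2 μ) :
    Integrable (fun x => min (f x) 0 ^ 2) μ :=
  (hf.inf (MemLp.zero (ε := ℝ))).integrable_sq

theorem tendsto_integral_slope_min_zero_sq (hf : MemLp f 2 μ) (hg : MemLp g 2 μ) :
    Tendsto (fun t : ℝ =>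
        ((∫ x, min (f x + t * g x) 0 ^ 2 ∂μ) - ∫ x, min (f x) 0 ^ 2 ∂μ) / t)
      (𝓝[>] 0) (𝓝 (2 * ∫ x, min (f x) 0 * g x ∂μ)) := by
  have hline (t : ℝ) : MemLp (fun x => f x + t * g x) 2 μ := hf.add (hg.const_mul t)
  have hslope (t : ℝ) : ((∫ x, min (f x + t * g x) 0 ^ 2 ∂μ) - ∫ x, min (f x) 0 ^ 2 ∂μ) / t =
      ∫ x, (min (f x + t * g x) 0 ^ 2 - min (f x) 0 ^ 2) / t ∂μ := by
    rw [← integral_sub (hline t).integrable_min_zero_sq hf.integrable_min_zero_sq,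
      integral_div]
  simp only [hslope, ← integral_const_mul, ← mul_assoc]
  refine tendsto_integral_filter_of_dominated_convergence (fun x => f x ^ 2 + 2 * g x ^ 2)
    (.of_forall fun t => ?_) ?_ (hf.integrable_sq.add (hg.integrable_sq.const_mul 2))
    (.of_forall fun x => tendsto_slope_min_zero_sq (f x) (g x))
  · exact (((hline t).integrable_min_zero_sq.sub hf.integrable_min_zero_sq).div_const t)
      |>.aestronglyMeasurable
  · filter_upwards [Ioc_mem_nhdsGT zero_lt_one] with t ⟨ht₀, ht₁⟩
    exact .of_forall fun x => abs_slope_min_zero_sq_le (f x) (g x) ht₀ ht₁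

end Integral

theorem neg_part_sq_directionally_differentiable {X : Type*} [MeasurableSpace X]
    (ν : Measure X) (v h : Lp ℝ 2 ν) :
    Tendsto
      (fun t : ℝ =>
        ((∫ x, (min ((v + t • h) x) 0) ^ 2 ∂ν) - ∫ x, (min (v x) 0) ^ 2 ∂ν) / t)
      (nhdsWithin 0 (Set.Ioi 0))
      (nhds (2 * ∫ x, min (v x) 0 * h x ∂ν)) := by
  have hcoe (t : ℝ) : ∫ x, min ((v + t • h) x) 0 ^ 2 ∂ν = ∫ x, min (v x + t * h x) 0 ^ 2 ∂ν := by
    refine integral_congr_ae ?_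
    filter_upwards [Lp.coeFn_add v (t • h), Lp.coeFn_smul t h] with x hadd hsmul
    rw [hadd, Pi.add_apply, hsmul, Pi.smul_apply, smul_eq_mul]
  simp only [hcoe]
  exact tendsto_integral_slope_min_zero_sq (Lp.memLp v) (Lp.memLp h)
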